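/- If a gem (M, c) has more than 4 vertices and has some 2-edge cut, then it has a 2-edge cut both of whose edges are coloured yellow. -/

import Mathlib

/-- The three colours used in a gem. -/
inductive Colour : Type
  | red | yellow | blue
deriving DecidableEq

/-- A proper edge colouring of a graph: two distinct edges sharing an endpoint
receive different colours. -/
def ProperEdgeColouring {V : Type*} {α : Type*} (G : SimpleGraph V) (c : Sym2 V → α) : Prop :=
  ∀ e₁ ∈ G.edgeSet, ∀ e₂ ∈ G.edgeSet, e₁ ≠ e₂ → (∃ v, v ∈ e₁ ∧ v ∈ e₂) → c e₁ ≠ c e₂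

/-- A cubic graph: every vertex has degree 3. -/
def IsCubic {V : Type*} (G : SimpleGraph V) : Prop :=
  ∀ v : V, (G.neighborSet v).ncard = 3

/-- The edge cut determined by a vertex set `S`: the set of edges of `G`
with exactly one endpoint in `S`. -/
def edgeCut {V : Type*} (G : SimpleGraph V) (S : Set V) : Set (Sym2 V) :=
  {e | ∃ u v, e = s(u, v) ∧ G.Adj u v ∧ u ∈ S ∧ v ∉ S}

/-- The spanning subgraph of `G` formed by the edges coloured `x` or `y`. -/
def twoColourSubgraph {V : Type*} {α : Type*} (G : SimpleGraph V) (c : Sym2 V → α)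
    (x y : α) : SimpleGraph V where
  Adj u v := G.Adj u v ∧ (c s(u, v) = x ∨ c s(u, v) = y)
  symm := ⟨by
    intro u v h
    refine ⟨h.1.symm, ?_⟩
    rw [Sym2.eq_swap]
    exact h.2⟩
  loopless := ⟨fun v h => G.loopless.irrefl v h.1⟩

/-- A gem: a connected cubic graph with a proper 3-edge-colouring (red, yellow,
blue) such that every connected component of the spanning subgraph formed by
the red and blue edges is a cycle of length 4 (equivalently, for a simple
graph: that subgraph is 2-regular and each of its connected components has
exactly 4 vertices). -/
structure IsGem {V : Type*} (M : SimpleGraph V) (c : Sym2 V → Colour) : Prop where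
  connected : M.Connected
  cubic : IsCubic M
  proper : ProperEdgeColouring M c
  rb_two_regular : ∀ v : V,
    ((twoColourSubgraph M c Colour.red Colour.blue).neighborSet v).ncard = 2
  rb_components_card4 : ∀ v : V,
    ((twoColourSubgraph M c Colour.red Colour.blue).connectedComponentMk v).supp.ncard = 4

/-!
Cut parity: the edges of one colour form a perfect matching, so for every colour the number of
cut edges of that colour has the parity of `|S|`. A 2-edge cut therefore carries one colour
twice. If it is yellow we are done. Otherwise both cut edges `a₁b₁`, `a₂b₂` (with `aᵢ ∈ S`) lie
in red–blue 4-cycles; closing the 4-cycle through `a₁b₁` produces a second crossing edge, which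
must be `a₂b₂`, so `b₁b₂` is a red–blue edge. Adding `b₁, b₂` to `S` then leaves exactly the
yellow edges at `b₁` and `b₂` in the cut.
-/

open SimpleGraph

instance : Fintype Colour :=
  ⟨{.red, .yellow, .blue}, by rintro (_ | _ | _) <;> simp⟩

theorem Colour.exists_ne_and_ne : ∀ a b : Colour, ∃ z, z ≠ a ∧ z ≠ b := by decide

theorem Finset.even_card_of_involution {ι : Type*} {s : Finset ι} (g : ι → ι)
    (hg : ∀ a ∈ s, g a ∈ s) (hgg : ∀ a ∈ s, g (g a) = a) (hne : ∀ a ∈ s, g a ≠ a) :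
    Even s.card := by
  have := Finset.sum_involution (s := s) (f := fun _ => (1 : ZMod 2)) (fun a _ => g a)
    (fun _ _ => rfl) (fun a ha _ => hne a ha) hg hgg
  simpa [ZMod.natCast_eq_zero_iff_even] using this

section EdgeCut

variable {V : Type*} {G : SimpleGraph V}

theorem eq_of_adj_of_edgeCut_eq_pair {S : Set V} {a₁ b₁ a₂ b₂ x y : V}
    (hS : edgeCut G S = {s(a₁, b₁), s(a₂, b₂)}) (ha₁ : a₁ ∈ S) (ha₂ : a₂ ∈ S)
    (hxy : G.Adj x y) (hx : x ∈ S) (hy : y ∉ S) : x = a₁ ∧ y = b₁ ∨ x = a₂ ∧ y = b₂ := by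
  have hmem : s(x, y) ∈ edgeCut G S := ⟨x, y, rfl, hxy, hx, hy⟩
  simp only [hS, Set.mem_insert_iff, Set.mem_singleton_iff, Sym2.eq_iff] at hmem
  rcases hmem with (h | ⟨-, rfl⟩) | (h | ⟨-, rfl⟩)
  exacts [.inl h, absurd ha₁ hy, .inr h, absurd ha₂ hy]

theorem edgeCut_union_pair {S : Set V} {a₁ b₁ a₂ b₂ w₁ w₂ : V}
    (hS : edgeCut G S = {s(a₁, b₁), s(a₂, b₂)}) (ha₁ : a₁ ∈ S) (ha₂ : a₂ ∈ S)
    (hw₁ : G.neighborSet b₁ \ (S ∪ {b₁, b₂}) = {w₁})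
    (hw₂ : G.neighborSet b₂ \ (S ∪ {b₁, b₂}) = {w₂}) :
    edgeCut G (S ∪ {b₁, b₂}) = {s(b₁, w₁), s(b₂, w₂)} := by
  ext e
  constructor
  · rintro ⟨x, y, rfl, hxy, hx | hx, hy⟩
    · have hyS : y ∉ S := fun h => hy (.inl h)
      rcases eq_of_adj_of_edgeCut_eq_pair hS ha₁ ha₂ hxy hx hyS with ⟨-, rfl⟩ | ⟨-, rfl⟩ <;>
        simp at hy
    · rcases hx with rfl | rfl
      · obtain rfl : y = w₁ := hw₁.subset ⟨hxy, hy⟩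
        exact .inl rfl
      · obtain rfl : y = w₂ := hw₂.subset ⟨hxy, hy⟩
        exact .inr rfl
  · rintro (rfl | rfl)
    · obtain ⟨hadj, hout⟩ := hw₁.symm.subset rfl
      exact ⟨b₁, w₁, rfl, hadj, .inr (.inl rfl), hout⟩
    · obtain ⟨hadj, hout⟩ := hw₂.symm.subset rfl
      exact ⟨b₂, w₂, rfl, hadj, .inr (.inr rfl), hout⟩

end EdgeCut

theorem SimpleGraph.neighborSet_eq_pair {V : Type*} {G : SimpleGraph V} {v x y : V}
    (h : (G.neighborSet v).ncard = 2) (hx : G.Adj v x) (hy : G.Adj v y) (hxy : x ≠ y) :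
    G.neighborSet v = {x, y} :=
  (Set.eq_of_subset_of_ncard_le (by simp [Set.insert_subset_iff, hx, hy])
    (by rw [h, Set.ncard_pair hxy]) (Set.finite_of_ncard_ne_zero (by omega))).symm

theorem IsCubic.neighborSet_eq {V : Type*} {G : SimpleGraph V} (hG : IsCubic G) {v x y z : V}
    (hx : G.Adj v x) (hy : G.Adj v y) (hz : G.Adj v z) (hxy : x ≠ y) (hxz : x ≠ z)
    (hyz : y ≠ z) : G.neighborSet v = {x, y, z} :=
  (Set.eq_of_subset_of_ncard_le (by simp [Set.insert_subset_iff, hx, hy, hz])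
    (by rw [hG v, Set.ncard_eq_three.2 ⟨x, y, z, hxy, hxz, hyz, rfl⟩])
    (Set.finite_of_ncard_ne_zero (by rw [hG v]; omega))).symm

namespace ProperEdgeColouring

variable {V α : Type*} {G : SimpleGraph V} {c : Sym2 V → α}

theorem eq_of_colour_eq (hc : ProperEdgeColouring G c) {v w w' : V} (hw : G.Adj v w)
    (hw' : G.Adj v w') (h : c s(v, w) = c s(v, w')) : w = w' := by
  by_contra hne
  exact hc _ hw _ hw' (mt Sym2.congr_right.1 hne)
    ⟨v, Sym2.mem_mk_left v w, Sym2.mem_mk_left v w'⟩ h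

theorem ncard_edgeCut_colour_mod_two (hc : ProperEdgeColouring G c) {x : α}
    (hx : ∀ v, ∃ w, G.Adj v w ∧ c s(v, w) = x) {S : Set V} (hS : S.Finite) :
    {e ∈ edgeCut G S | c e = x}.ncard % 2 = S.ncard % 2 := by
  classical
  -- `m` pairs up the vertices along `x`-edges; `S` splits into whole pairs and the tails
  -- of the crossing `x`-edges.
  choose m hadj hcol using hx
  have hmm : ∀ v, m (m v) = v := fun v =>
    hc.eq_of_colour_eq (hadj (m v)) (hadj v).symm (by rw [hcol, Sym2.eq_swap, hcol])
  have hinside : Even (hS.toFinset.filter (m · ∈ S)).card := by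
    refine Finset.even_card_of_involution m (fun v hv => ?_) (fun v _ => hmm v)
      (fun v _ => (hadj v).ne')
    simp only [Finset.mem_filter, Set.Finite.mem_toFinset] at hv ⊢
    exact ⟨hv.2, by rw [hmm]; exact hv.1⟩
  have hcross : {e ∈ edgeCut G S | c e = x} =
      (fun v => s(v, m v)) '' ↑(hS.toFinset.filter (m · ∉ S)) := by
    ext e
    constructor
    · rintro ⟨⟨u, v, rfl, huv, hu, hv⟩, he⟩
      obtain rfl : v = m u := hc.eq_of_colour_eq huv (hadj u) (he.trans (hcol u).symm)
      exact ⟨u, by simp [hu, hv], rfl⟩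
    · rintro ⟨v, hv, rfl⟩
      simp only [Finset.coe_filter, Set.Finite.mem_toFinset, Set.mem_ofPred_eq] at hv
      exact ⟨⟨v, m v, rfl, hadj v, hv.1, hv.2⟩, hcol v⟩
  have hinj : Set.InjOn (fun v => s(v, m v)) ↑(hS.toFinset.filter (m · ∉ S)) := by
    intro u hu v hv huv
    simp only [Finset.coe_filter, Set.Finite.mem_toFinset, Set.mem_ofPred_eq] at hu hv
    rcases Sym2.eq_iff.1 huv with ⟨h, -⟩ | ⟨rfl, -⟩
    exacts [h, absurd hu.1 hv.2]
  rw [hcross, hinj.ncard_image, Set.ncard_coe_finset, Set.ncard_eq_toFinset_card S hS,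
    ← Finset.card_filter_add_card_filter_not (s := hS.toFinset) (m · ∈ S)]
  obtain ⟨k, hk⟩ := hinside
  omega

end ProperEdgeColouring

namespace IsCubic

variable {V : Type*} {G : SimpleGraph V} {c : Sym2 V → Colour}

theorem exists_adj_colour (hG : IsCubic G) (hc : ProperEdgeColouring G c) (v : V) (x : Colour) :
    ∃ w, G.Adj v w ∧ c s(v, w) = x := by
  have hinj : Set.InjOn (fun w => c s(v, w)) (G.neighborSet v) :=
    fun _ hw _ hw' h => hc.eq_of_colour_eq hw hw' h
  have himage : (fun w => c s(v, w)) '' G.neighborSet v = Set.univ :=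
    Set.eq_of_subset_of_ncard_le (Set.subset_univ _)
      (by rw [hinj.ncard_image, hG v, Set.ncard_univ, Nat.card_eq_fintype_card]; rfl)
  exact (himage ▸ Set.mem_univ x : x ∈ (fun w => c s(v, w)) '' G.neighborSet v)

theorem colour_eq_of_edgeCut_eq_pair [Finite V] (hG : IsCubic G) (hc : ProperEdgeColouring G c)
    {S : Set V} {e₁ e₂ : Sym2 V} (hS : edgeCut G S = {e₁, e₂}) (hne : e₁ ≠ e₂) :
    c e₁ = c e₂ := by
  by_contra h
  obtain ⟨z, hz₁, hz₂⟩ := Colour.exists_ne_and_ne (c e₁) (c e₂)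
  have hparity := fun x =>
    hc.ncard_edgeCut_colour_mod_two (hG.exists_adj_colour hc · x) S.toFinite
  have hone : {e ∈ edgeCut G S | c e = c e₁} = {e₁} := by
    ext e
    simp only [hS, Set.mem_insert_iff, Set.mem_singleton_iff]
    constructor
    · rintro ⟨rfl | rfl, he⟩
      exacts [rfl, absurd he.symm h]
    · rintro rfl
      exact ⟨.inl rfl, rfl⟩
  have hnone : {e ∈ edgeCut G S | c e = z} = ∅ := by
    ext e
    simp only [hS, Set.mem_insert_iff, Set.mem_singleton_iff, Set.mem_empty_iff_false, iff_false]
    rintro ⟨rfl | rfl, he⟩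
    exacts [hz₁ he.symm, hz₂ he.symm]
  have h₁ := hparity (c e₁)
  have h₀ := hparity z
  rw [hone, Set.ncard_singleton] at h₁
  rw [hnone, Set.ncard_empty] at h₀
  omega

end IsCubic

theorem SimpleGraph.adj_of_components_four_cycles {V : Type*} {H : SimpleGraph V}
    (hreg : ∀ v, (H.neighborSet v).ncard = 2)
    (hcomp : ∀ v, (H.connectedComponentMk v).supp.ncard = 4) {a b u v : V}
    (hab : H.Adj a b) (hbu : H.Adj b u) (hav : H.Adj a v) (hua : u ≠ a) (hvb : v ≠ b)
    (huv : u ≠ v) : H.Adj u v := by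
  have hK : (H.connectedComponentMk a).supp = {v, a, b, u} := by
    refine (Set.eq_of_subset_of_ncard_le ?_ ?_
      (Set.finite_of_ncard_ne_zero (by rw [hcomp a]; omega))).symm
    · simp only [Set.insert_subset_iff, Set.singleton_subset_iff,
        ConnectedComponent.mem_supp_iff, ConnectedComponent.eq]
      exact ⟨hav.symm.reachable, trivial, hab.symm.reachable,
        (hab.reachable.trans hbu.reachable).symm⟩
    · rw [hcomp a, Set.ncard_insert_of_notMem (by simp [hav.ne', hvb, huv.symm]),
        Set.ncard_insert_of_notMem (by simp [hab.ne, hua.symm]),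
        Set.ncard_pair hbu.ne]
  have hna : H.neighborSet a = {b, v} := H.neighborSet_eq_pair (hreg a) hab hav hvb.symm
  have hnu : H.neighborSet u ⊆ {v, b} := by
    intro t hut
    have htK : t ∈ (H.connectedComponentMk a).supp :=
      ConnectedComponent.eq.2 ((hab.reachable.trans hbu.reachable).trans (Adj.reachable hut)).symm
    rw [hK] at htK
    rcases htK with rfl | rfl | rfl | rfl
    · exact .inl rfl
    · have : u ∈ H.neighborSet t := Adj.symm hut
      rw [hna] at this
      rcases this with rfl | rfl
      exacts [(hbu.ne rfl).elim, (huv rfl).elim]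
    · exact .inr rfl
    · exact absurd hut (H.loopless.irrefl _)
  show v ∈ H.neighborSet u
  rw [Set.eq_of_subset_of_ncard_le hnu (by rw [hreg u, Set.ncard_pair hvb])]
  exact .inl rfl

section EdgeCutPair

variable {V : Type*} {M : SimpleGraph V} {S : Set V} {a₁ b₁ a₂ b₂ : V}

theorem adj_of_edgeCut_eq_pair {H : SimpleGraph V} (hHM : H ≤ M)
    (hreg : ∀ v, (H.neighborSet v).ncard = 2)
    (hcomp : ∀ v, (H.connectedComponentMk v).supp.ncard = 4)
    (hS : edgeCut M S = {s(a₁, b₁), s(a₂, b₂)}) (ha₁ : a₁ ∈ S) (ha₂ : a₂ ∈ S) (hb₁ : b₁ ∉ S)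
    (hab₁ : H.Adj a₁ b₁) (ha₁₂ : a₁ ≠ a₂) (hb₁₂ : b₁ ≠ b₂) : H.Adj b₁ b₂ := by
  obtain ⟨u, hbu, hua⟩ := Set.exists_ne_of_one_lt_ncard (s := H.neighborSet b₁)
    (by rw [hreg b₁]; omega) a₁
  obtain ⟨v, hav, hvb⟩ := Set.exists_ne_of_one_lt_ncard (s := H.neighborSet a₁)
    (by rw [hreg a₁]; omega) b₁
  have hu : u ∉ S := fun hu => by
    rcases eq_of_adj_of_edgeCut_eq_pair hS ha₁ ha₂ (hHM hbu.symm) hu hb₁ with ⟨h, -⟩ | ⟨-, h⟩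
    exacts [hua h, hb₁₂ h]
  have hv : v ∈ S := by
    by_contra hv
    rcases eq_of_adj_of_edgeCut_eq_pair hS ha₁ ha₂ (hHM hav) ha₁ hv with ⟨-, h⟩ | ⟨h, -⟩
    exacts [hvb h, ha₁₂ h]
  have huv : H.Adj u v := H.adj_of_components_four_cycles hreg hcomp hab₁ hbu hav hua hvb
    (by rintro rfl; exact hu hv)
  rcases eq_of_adj_of_edgeCut_eq_pair hS ha₁ ha₂ (hHM huv.symm) hv hu with ⟨h, -⟩ | ⟨-, rfl⟩
  exacts [(hav.ne h.symm).elim, hbu]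

theorem IsCubic.neighborSet_diff_union_pair (hM : IsCubic M) {w : V}
    (hS : edgeCut M S = {s(a₁, b₁), s(a₂, b₂)}) (ha₁ : a₁ ∈ S) (ha₂ : a₂ ∈ S) (hb₁ : b₁ ∉ S)
    (hb₂ : b₂ ∉ S) (hb₁₂ : b₁ ≠ b₂) (hab₁ : M.Adj a₁ b₁) (hbb : M.Adj b₁ b₂) (hw : M.Adj b₁ w)
    (ha₁w : a₁ ≠ w) (hb₂w : b₂ ≠ w) :
    M.neighborSet b₁ \ (S ∪ {b₁, b₂}) = {w} := by
  have hwS : w ∉ S := fun hwS => by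
    rcases eq_of_adj_of_edgeCut_eq_pair hS ha₁ ha₂ hw.symm hwS hb₁ with ⟨h, -⟩ | ⟨-, h⟩
    exacts [ha₁w h.symm, hb₁₂ h]
  rw [hM.neighborSet_eq hab₁.symm hbb hw (fun h => hb₂ (h ▸ ha₁)) ha₁w hb₂w]
  ext y
  simp only [Set.mem_sdiff, Set.mem_insert_iff, Set.mem_singleton_iff, Set.mem_union]
  constructor
  · rintro ⟨rfl | rfl | rfl, hy⟩ <;> tauto
  · rintro rfl
    exact ⟨.inr (.inr rfl), by simp [hwS, hw.ne', hb₂w.symm]⟩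

end EdgeCutPair

theorem twoColourSubgraph_red_blue_adj_iff {V : Type*} {M : SimpleGraph V}
    {c : Sym2 V → Colour} {u v : V} :
    (twoColourSubgraph M c .red .blue).Adj u v ↔ M.Adj u v ∧ c s(u, v) ≠ .yellow := by
  simp only [twoColourSubgraph]
  cases c s(u, v) <;> simp

theorem IsGem.exists_yellow_edgeCut {V : Type*} {M : SimpleGraph V} {c : Sym2 V → Colour}
    (hgem : IsGem M c) {S : Set V} {e₁ e₂ : Sym2 V} (hS : edgeCut M S = {e₁, e₂})
    (hne : e₁ ≠ e₂) (hcol : c e₁ = c e₂) (hy : c e₁ ≠ .yellow) :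
    ∃ (S' : Set V) (g₁ g₂ : Sym2 V), S'.Nonempty ∧ S'ᶜ.Nonempty ∧ g₁ ≠ g₂ ∧
      edgeCut M S' = {g₁, g₂} ∧ c g₁ = .yellow ∧ c g₂ = .yellow := by
  obtain ⟨a₁, b₁, rfl, hab₁, ha₁, hb₁⟩ : e₁ ∈ edgeCut M S := hS ▸ .inl rfl
  obtain ⟨a₂, b₂, rfl, hab₂, ha₂, hb₂⟩ : e₂ ∈ edgeCut M S := hS ▸ .inr rfl
  have ha₁₂ : a₁ ≠ a₂ := by
    rintro rfl
    exact hne (congrArg _ (hgem.proper.eq_of_colour_eq hab₁ hab₂ hcol))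
  have hb₁₂ : b₁ ≠ b₂ := by
    rintro rfl
    rw [Sym2.eq_swap, Sym2.eq_swap (a := a₂)] at hcol hne
    exact hne (congrArg _ (hgem.proper.eq_of_colour_eq hab₁.symm hab₂.symm hcol))
  obtain ⟨hbb, hbby⟩ := twoColourSubgraph_red_blue_adj_iff.1 <|
    adj_of_edgeCut_eq_pair (H := twoColourSubgraph M c .red .blue) (fun _ _ h => h.1)
      hgem.rb_two_regular hgem.rb_components_card4 hS ha₁ ha₂ hb₁
      (twoColourSubgraph_red_blue_adj_iff.2 ⟨hab₁, hy⟩) ha₁₂ hb₁₂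
  obtain ⟨w₁, hw₁, hw₁y⟩ := hgem.cubic.exists_adj_colour hgem.proper b₁ .yellow
  obtain ⟨w₂, hw₂, hw₂y⟩ := hgem.cubic.exists_adj_colour hgem.proper b₂ .yellow
  have hN₁ := hgem.cubic.neighborSet_diff_union_pair hS ha₁ ha₂ hb₁ hb₂ hb₁₂ hab₁ hbb hw₁
    (by rintro rfl; rw [Sym2.eq_swap] at hy; exact hy hw₁y) (by rintro rfl; exact hbby hw₁y)
  have hN₂ := hgem.cubic.neighborSet_diff_union_pair (hS.trans (Set.pair_comm _ _)) ha₂ ha₁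
    hb₂ hb₁ hb₁₂.symm hab₂ hbb.symm hw₂
    (by rintro rfl; rw [hcol, Sym2.eq_swap] at hy; exact hy hw₂y)
    (by rintro rfl; rw [Sym2.eq_swap] at hbby; exact hbby hw₂y)
  rw [Set.pair_comm b₂ b₁] at hN₂
  have hw₁T : w₁ ∉ S ∪ {b₁, b₂} := (hN₁.symm.subset rfl).2
  have hw₂T : w₂ ∉ S ∪ {b₁, b₂} := (hN₂.symm.subset rfl).2
  refine ⟨S ∪ {b₁, b₂}, s(b₁, w₁), s(b₂, w₂), ⟨a₁, .inl ha₁⟩, ⟨w₁, hw₁T⟩, ?_,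
    edgeCut_union_pair hS ha₁ ha₂ hN₁ hN₂, hw₁y, hw₂y⟩
  rintro h
  rcases Sym2.eq_iff.1 h with ⟨h, -⟩ | ⟨rfl, -⟩
  exacts [hb₁₂ h, hw₂T (.inr (.inl rfl))]

theorem gem_yellow_two_edge_cut_general {V : Type*} [Fintype V]
    (M : SimpleGraph V) (c : Sym2 V → Colour) (hgem : IsGem M c)
    (hcut : ∃ S : Set V, S.Nonempty ∧ Sᶜ.Nonempty ∧ (edgeCut M S).ncard = 2) :
    ∃ (S : Set V) (g1 g2 : Sym2 V), S.Nonempty ∧ Sᶜ.Nonempty ∧ g1 ≠ g2 ∧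
      edgeCut M S = {g1, g2} ∧ c g1 = Colour.yellow ∧ c g2 = Colour.yellow := by
  obtain ⟨S, hSne, hScne, hS2⟩ := hcut
  obtain ⟨e₁, e₂, hne, hS⟩ := Set.ncard_eq_two.1 hS2
  have hcol := hgem.cubic.colour_eq_of_edgeCut_eq_pair hgem.proper hS hne
  by_cases hy : c e₁ = .yellow
  · exact ⟨S, e₁, e₂, hSne, hScne, hne, hS, hy, hcol ▸ hy⟩
  · exact hgem.exists_yellow_edgeCut hS hne hcol hy

/-- If a gem has more than 4 vertices and has some 2-edge cut, then it has a
2-edge cut both of whose edges are coloured yellow. -/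
theorem gem_yellow_two_edge_cut {V : Type*} [Fintype V]
    (M : SimpleGraph V) (c : Sym2 V → Colour) (hgem : IsGem M c)
    (hcard : 4 < Fintype.card V)
    (hcut : ∃ S : Set V, S.Nonempty ∧ Sᶜ.Nonempty ∧ (edgeCut M S).ncard = 2) :
    ∃ (S : Set V) (g1 g2 : Sym2 V), S.Nonempty ∧ Sᶜ.Nonempty ∧ g1 ≠ g2 ∧
      edgeCut M S = {g1, g2} ∧ c g1 = Colour.yellow ∧ c g2 = Colour.yellow :=
  gem_yellow_two_edge_cut_general M c hgem hcut
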